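/- The k-means algorithm performs Newton iterations on the objective W_n: let X₁, …, Xₙ ∈ ℝ, let H = ∪_{k,l=1}^{K'} ∪_{i=1}^{n} {c ∈ ℝ^{K'} : X_i = (c_k + c_l)/2}, and let c ∈ ℝ^{K'} \ H have pairwise distinct coordinates with C_k(c) = {i : |X_i − c_k| < |X_i − c_l| for all l ≠ k} nonempty for every k (so N_k(c) = |C_k(c)| ≥ 1). Then the Hessian of W_n at c is invertible and the Newton step c − (Hess W_n(c))^{−1} ∇W_n(c) equals the k-means update c', whose k-th coordinate is c'_k = (1/N_k(c))·∑_{i ∈ C_k(c)} X_i. -/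

import Mathlib

open scoped Classical

noncomputable def Wn (n K' : ℕ) (X : Fin n → ℝ) (c : Fin K' → ℝ) : ℝ :=
  (1 / 2) * ∑ i, ⨅ k, (c k - X i) ^ 2

set_option maxHeartbeats 1000000 in
/-- the k-means update is a Newton iteration on `W_n`. Away from
the set `H`, for centers with pairwise distinct coordinates and all clusters
`C_k(c)` (points strictly closest to `c_k`) nonempty, the Hessian of `W_n` at
`c` is invertible and the Newton step `c − (Hess W_n(c))⁻¹ ∇W_n(c)` equals the
k-means update `c'_k = (1/N_k)·∑_{i ∈ C_k(c)} X_i`. -/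
theorem stmt10 (n K' : ℕ) (hK' : 0 < K') (X : Fin n → ℝ) (c : Fin K' → ℝ)
    (hcH : ∀ (k l : Fin K') (i : Fin n), X i ≠ (c k + c l) / 2)
    (hinj : Function.Injective c)
    (Ck : Fin K' → Finset (Fin n))
    (hCk : ∀ k, Ck k = Finset.univ.filter
        (fun i : Fin n => ∀ l, l ≠ k → |X i - c k| < |X i - c l|))
    (hne : ∀ k, (Ck k).Nonempty)
    (Hess : Matrix (Fin K') (Fin K') ℝ)
    (hHess : ∀ k l, Hess k l =
        fderiv ℝ (fun x => fderiv ℝ (Wn n K' X) x (Pi.single l 1)) c (Pi.single k 1))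
    (grad : Fin K' → ℝ)
    (hgrad : ∀ k, grad k = fderiv ℝ (Wn n K' X) c (Pi.single k 1)) :
    IsUnit Hess ∧
    ∀ k, c k - (Hess⁻¹.mulVec grad) k = (∑ i ∈ Ck k, X i) / (Ck k).card := by
  haveI : Nonempty (Fin K') := ⟨⟨0, hK'⟩⟩
  set P : Fin K' → ((Fin K' → ℝ) →L[ℝ] ℝ) :=
    fun k => ContinuousLinearMap.proj k with hP
  have hex : ∀ i : Fin n, ∃ k : Fin K', ∀ l, |X i - c k| ≤ |X i - c l| := fun i =>
    Finite.exists_min (fun k => |X i - c k|)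
  choose k0 hk0 using hex
  have hstrict : ∀ i l, l ≠ k0 i → |X i - c (k0 i)| < |X i - c l| := by
    intro i l hl
    rcases lt_or_eq_of_le (hk0 i l) with h | h
    · exact h
    · exfalso
      rcases abs_eq_abs.mp h with h' | h'
      · exact hl (hinj (by linarith)).symm
      · exact hcH (k0 i) l i (by linarith)
  have hmem : ∀ k i, i ∈ Ck k ↔ k0 i = k := by
    intro k i
    rw [hCk k, Finset.mem_filter]
    constructor
    · rintro ⟨-, h⟩
      by_contra hk
      exact absurd (hk0 i k) (not_le.mpr (h _ hk))
    · rintro rfl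
      exact ⟨Finset.mem_univ i, fun l hl => hstrict i l hl⟩
  have hCkf : ∀ k, Ck k = Finset.univ.filter (fun i => k0 i = k) := by
    intro k; ext i; rw [hmem, Finset.mem_filter]; simp
  set U : Set (Fin K' → ℝ) :=
    ⋂ i : Fin n, ⋂ l : Fin K',
      {x : Fin K' → ℝ | l ≠ k0 i → |X i - x (k0 i)| < |X i - x l|} with hU
  have hUopen : IsOpen U := by
    apply isOpen_iInter_of_finite; intro i
    apply isOpen_iInter_of_finite; intro l
    by_cases hl : l = k0 i
    · simp [hl]
    · have : {x : Fin K' → ℝ | l ≠ k0 i → |X i - x (k0 i)| < |X i - x l|}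
          = {x : Fin K' → ℝ | |X i - x (k0 i)| < |X i - x l|} := by
        ext x; simp [hl]
      rw [this]
      exact isOpen_lt (by continuity) (by continuity)
  have hcU : c ∈ U := by
    simp only [hU, Set.mem_iInter, Set.mem_setOf_eq]
    intro i l hl; exact hstrict i l hl
  set g : (Fin K' → ℝ) → ℝ := fun x => (1 / 2) * ∑ i, (x (k0 i) - X i) ^ 2 with hg
  have hWg : ∀ x ∈ U, Wn n K' X x = g x := by
    intro x hx
    simp only [hU, Set.mem_iInter, Set.mem_setOf_eq] at hx
    unfold Wn
    congr 1
    apply Finset.sum_congr rfl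
    intro i _
    have hmin : ∀ k, (x (k0 i) - X i) ^ 2 ≤ (x k - X i) ^ 2 := by
      intro k
      by_cases hk : k = k0 i
      · rw [hk]
      · have := hx i k hk
        have h1 : |x (k0 i) - X i| ≤ |x k - X i| := by
          rw [abs_sub_comm (x (k0 i)), abs_sub_comm (x k)]; exact this.le
        calc (x (k0 i) - X i) ^ 2 = |x (k0 i) - X i| ^ 2 := (sq_abs _).symm
          _ ≤ |x k - X i| ^ 2 := pow_le_pow_left₀ (abs_nonneg _) h1 2
          _ = (x k - X i) ^ 2 := sq_abs _
    exact le_antisymm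
      (ciInf_le (Set.Finite.bddBelow (Set.finite_range _)) (k0 i))
      (le_ciInf hmin)
  have hWgev : Wn n K' X =ᶠ[nhds c] g :=
    Filter.eventuallyEq_of_mem (hUopen.mem_nhds hcU) hWg
  set L : (Fin K' → ℝ) → ((Fin K' → ℝ) →L[ℝ] ℝ) := fun x =>
    ∑ i : Fin n, (x (k0 i) - X i) • P (k0 i) with hL
  have hPapp : ∀ (a : Fin n → ℝ) (v : Fin K' → ℝ),
      (∑ i : Fin n, a i • P (k0 i)) v = ∑ i : Fin n, a i * v (k0 i) := by
    intro a v
    rw [ContinuousLinearMap.sum_apply]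
    apply Finset.sum_congr rfl
    intro i _
    rw [ContinuousLinearMap.smul_apply, hP, ContinuousLinearMap.proj_apply, smul_eq_mul]
  have hgderiv : ∀ x, HasFDerivAt g (L x) x := by
    intro x
    have hterm : ∀ i : Fin n, HasFDerivAt (fun y : Fin K' → ℝ => (y (k0 i) - X i) ^ 2)
        (((2 : ℝ) * (x (k0 i) - X i)) • P (k0 i)) x := by
      intro i
      have h1 : HasFDerivAt (fun y : Fin K' → ℝ => y (k0 i) - X i) (P (k0 i)) x :=
        ((P (k0 i)).hasFDerivAt (x := x)).sub_const (X i)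
      have h2 := h1.mul h1
      have h3 := h2.congr_fderiv (show _ = ((2:ℝ) * (x (k0 i) - X i)) • P (k0 i) by rw [two_mul, add_smul])
      refine h3.congr_of_eventuallyEq (Filter.Eventually.of_forall fun y => ?_)
      simp only [Pi.mul_apply]; ring
    have hsum := HasFDerivAt.sum (fun i (_ : i ∈ Finset.univ) => hterm i)
    have h2 := hsum.const_mul (1 / 2 : ℝ)
    have heq : ((1 / 2 : ℝ) • ∑ i : Fin n, ((2 : ℝ) * (x (k0 i) - X i)) •
        P (k0 i)) = L x := by
      rw [Finset.smul_sum]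
      simp only [hL, smul_smul]
      apply Finset.sum_congr rfl
      intro i _
      congr 1
      ring
    rw [heq] at h2
    exact h2.congr_of_eventuallyEq (Filter.Eventually.of_forall fun y => by simp [hg, Finset.sum_apply])
  have hfderivg : ∀ x, fderiv ℝ g x = L x := fun x => (hgderiv x).fderiv
  have hLapp : ∀ x (v : Fin K' → ℝ), L x v = ∑ i, (x (k0 i) - X i) * v (k0 i) := by
    intro x v
    simp [hL, hP, ContinuousLinearMap.proj_apply, smul_eq_mul]
  -- gradient formula
  have hgrad' : ∀ k, grad k = ∑ i ∈ Ck k, (c k - X i) := by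
    intro k
    rw [hgrad k, hWgev.fderiv_eq, hfderivg, hLapp]
    have hterm : ∀ i : Fin n, (c (k0 i) - X i) * (Pi.single k 1 : Fin K' → ℝ) (k0 i)
        = if k0 i = k then c k - X i else 0 := by
      intro i
      rw [Pi.single_apply]
      split_ifs with h
      · rw [h]; ring
      · ring
    rw [Finset.sum_congr rfl (fun i _ => hterm i), hCkf k, Finset.sum_filter]
  -- second derivative
  have hsecond : ∀ (l : Fin K') (x : Fin K' → ℝ),
      HasFDerivAt (fun y => L y (Pi.single l 1))
      (∑ i : Fin n, ((Pi.single l 1 : Fin K' → ℝ) (k0 i)) • P (k0 i)) x := by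
    intro l x
    have hterm : ∀ i : Fin n, HasFDerivAt
        (fun y : Fin K' → ℝ => (y (k0 i) - X i) * (Pi.single l 1 : Fin K' → ℝ) (k0 i))
        (((Pi.single l 1 : Fin K' → ℝ) (k0 i)) • P (k0 i)) x :=
      fun i => (((P (k0 i)).hasFDerivAt (x := x)).sub_const (X i)).mul_const _
    have hsum := HasFDerivAt.sum (fun i (_ : i ∈ Finset.univ) => hterm i)
    have hfun : (fun y : Fin K' → ℝ => L y (Pi.single l 1))
        = fun y => ∑ i : Fin n, (y (k0 i) - X i) * (Pi.single l 1 : Fin K' → ℝ) (k0 i) := by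
      funext y; rw [hLapp]
    rw [hfun]
    exact hsum.congr_of_eventuallyEq (Filter.Eventually.of_forall fun y => by simp [Finset.sum_apply])
  have hHess' : ∀ k l, Hess k l = if k = l then ((Ck k).card : ℝ) else 0 := by
    intro k l
    rw [hHess k l]
    have hev : (fun x => fderiv ℝ (Wn n K' X) x (Pi.single l 1)) =ᶠ[nhds c]
        (fun x => L x ((Pi.single l 1 : Fin K' → ℝ))) := by
      filter_upwards [hWgev.fderiv (𝕜 := ℝ)] with x hx
      rw [hx, hfderivg]
    rw [hev.fderiv_eq, (hsecond l c).fderiv, hPapp]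
    simp only [Pi.single_apply]
    have hterm : ∀ i : Fin n,
        (if k0 i = l then (1:ℝ) else 0) * (if k0 i = k then (1:ℝ) else 0)
        = if k = l then (if k0 i = k then (1:ℝ) else 0) else 0 := by
      intro i
      by_cases h1 : k0 i = l <;> by_cases h2 : k0 i = k <;> by_cases h3 : k = l <;>
        simp_all
    rw [Finset.sum_congr rfl (fun i _ => hterm i)]
    by_cases h3 : k = l
    · simp only [h3, if_true]
      rw [Finset.sum_boole, ← hCkf l]
    · simp [h3]
  -- Hessian is diagonal with positive entries
  have hcard : ∀ k, ((Ck k).card : ℝ) ≠ 0 := fun k =>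
    Nat.cast_ne_zero.mpr (Finset.card_pos.mpr (hne k)).ne'
  have hHd : Hess = Matrix.diagonal (fun k => ((Ck k).card : ℝ)) := by
    ext k l
    rw [hHess' k l, Matrix.diagonal_apply]
  have hUnit : IsUnit Hess := by
    rw [hHd, Matrix.isUnit_iff_isUnit_det, Matrix.det_diagonal]
    exact isUnit_iff_ne_zero.mpr (Finset.prod_ne_zero_iff.mpr fun k _ => hcard k)
  have hinvH : Hess⁻¹ = Matrix.diagonal (fun k => (((Ck k).card : ℝ))⁻¹) := by
    apply Matrix.inv_eq_right_inv
    rw [hHd, Matrix.diagonal_mul_diagonal]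
    rw [show (fun k => ((Ck k).card : ℝ) * (((Ck k).card : ℝ))⁻¹) = fun _ => (1:ℝ) from
      funext fun k => mul_inv_cancel₀ (hcard k)]
    exact Matrix.diagonal_one
  refine ⟨hUnit, fun k => ?_⟩
  rw [hinvH, Matrix.mulVec_diagonal, hgrad' k]
  rw [Finset.sum_sub_distrib, Finset.sum_const, nsmul_eq_mul]
  field_simp [hcard k]
  ring
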